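/- Let A, Ã ∈ S_{d,K}, and suppose B := AᵀÃÃᵀA is symmetric positive semidefinite with all eigenvalues in [0,1] and AᵀÃ = B^{1/2}. Then ‖ÃÃᵀ − AAᵀ‖² = 2 tr(I_K − B), ‖Ã − A‖² = 2 tr(I_K − B^{1/2}), and consequently ‖ÃÃᵀ − AAᵀ‖² ≥ ‖Ã − A‖². -/

import Mathlib

/-!
With orthonormal columns, `A Aᵀ` and `Ã Ãᵀ` are orthogonal projections of trace `K`, so expanding
the squared norms gives `2K - 2 tr B` and `2K - 2 tr (Aᵀ Ã) = 2K - 2 tr B^{1/2}`. The inequality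
is then `tr B ≤ tr B^{1/2}`, which holds eigenvalue by eigenvalue: the eigenvalues `μ` of `B` lie
in `[0, 1]`, where `μ ≤ √μ`.
-/

open Matrix

/-- The square root of a positive semidefinite matrix (removed from Mathlib; old definition). -/
noncomputable def Matrix.PosSemidef.sqrt {n 𝕜 : Type*} [Fintype n] [DecidableEq n] [RCLike 𝕜] [PartialOrder 𝕜]
    {A : Matrix n n 𝕜} (hA : A.PosSemidef) : Matrix n n 𝕜 :=
  (hA.1.eigenvectorUnitary : Matrix n n 𝕜) *
    diagonal ((RCLike.ofReal : ℝ → 𝕜) ∘ (√·) ∘ hA.1.eigenvalues) *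
  (star hA.1.eigenvectorUnitary : Matrix n n 𝕜)

/-- Frobenius norm of a real matrix. -/
noncomputable def frob {m n : ℕ} (M : Matrix (Fin m) (Fin n) ℝ) : ℝ :=
  Real.sqrt (∑ i, ∑ j, (M i j) ^ 2)

namespace Matrix

variable {m n : Type*} [Fintype m] [Fintype n]

lemma IsHermitian.eigenvalues_le_one [DecidableEq n] {A : Matrix n n ℝ} (hA : A.IsHermitian)
    (h : (1 - A).PosSemidef) (i : n) : hA.eigenvalues i ≤ 1 := by
  set v := hA.eigenvectorBasis i
  have hv : star v.ofLp ⬝ᵥ v.ofLp = 1 := by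
    rw [dotProduct_comm, ← EuclideanSpace.inner_eq_star_dotProduct, real_inner_self_eq_norm_sq,
      hA.eigenvectorBasis.orthonormal.1 i, one_pow]
  have := h.re_dotProduct_nonneg v.ofLp
  rw [sub_mulVec, one_mulVec, dotProduct_sub, map_sub, hv, ← hA.eigenvalues_eq] at this
  simpa [sub_nonneg] using this

lemma PosSemidef.trace_sqrt [DecidableEq n] {A : Matrix n n ℝ} (hA : A.PosSemidef) :
    hA.sqrt.trace = ∑ i, √(hA.1.eigenvalues i) := by
  rw [PosSemidef.sqrt, trace_mul_cycle, Unitary.coe_star_mul_self, one_mul, trace_diagonal]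
  rfl

lemma PosSemidef.trace_le_trace_sqrt [DecidableEq n] {A : Matrix n n ℝ} (hA : A.PosSemidef)
    (h : (1 - A).PosSemidef) : A.trace ≤ hA.sqrt.trace := by
  rw [hA.1.trace_eq_sum_eigenvalues, hA.trace_sqrt]
  exact Finset.sum_le_sum fun i _ => Real.le_sqrt_self_iff.mpr (hA.1.eigenvalues_le_one h i)

lemma trace_transpose_mul_self_eq_sum_sq (M : Matrix m n ℝ) :
    (Mᵀ * M).trace = ∑ i, ∑ j, M i j ^ 2 := by
  simp only [trace, diag, mul_apply, transpose_apply, sq]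
  exact Finset.sum_comm

variable [DecidableEq n] {A B : Matrix m n ℝ}

lemma trace_mul_transpose_eq_card (hA : Aᵀ * A = 1) : (A * Aᵀ).trace = Fintype.card n := by
  rw [trace_mul_comm, hA, trace_one]

lemma isIdempotentElem_mul_transpose (hA : Aᵀ * A = 1) : IsIdempotentElem (A * Aᵀ) := by
  rw [IsIdempotentElem, Matrix.mul_assoc, ← Matrix.mul_assoc Aᵀ, hA, Matrix.one_mul]

lemma trace_transpose_mul_self_sub (hA : Aᵀ * A = 1) (hB : Bᵀ * B = 1) :
    ((B - A)ᵀ * (B - A)).trace = 2 * (1 - Aᵀ * B).trace := by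
  have hBA : (Bᵀ * A).trace = (Aᵀ * B).trace := by
    rw [← trace_transpose, transpose_mul, transpose_transpose]
  simp only [transpose_sub, Matrix.sub_mul, Matrix.mul_sub, trace_sub, hA, hB, hBA]
  ring

lemma trace_transpose_mul_self_mul_transpose_sub (hA : Aᵀ * A = 1) (hB : Bᵀ * B = 1) :
    ((B * Bᵀ - A * Aᵀ)ᵀ * (B * Bᵀ - A * Aᵀ)).trace = 2 * (1 - Aᵀ * (B * Bᵀ) * A).trace := by
  have hcross : (B * Bᵀ * (A * Aᵀ)).trace = (Aᵀ * (B * Bᵀ) * A).trace := by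
    rw [← Matrix.mul_assoc, trace_mul_comm, ← Matrix.mul_assoc]
  have hcross' : (A * Aᵀ * (B * Bᵀ)).trace = (Aᵀ * (B * Bᵀ) * A).trace := by
    rw [Matrix.mul_assoc, trace_mul_comm]
  simp only [transpose_sub, transpose_mul, transpose_transpose, Matrix.sub_mul, Matrix.mul_sub,
    trace_sub, (isIdempotentElem_mul_transpose hA).eq, (isIdempotentElem_mul_transpose hB).eq,
    hcross, hcross', trace_mul_transpose_eq_card hA, trace_mul_transpose_eq_card hB, trace_one]
  ring

end Matrix

lemma frob_sq {m n : ℕ} (M : Matrix (Fin m) (Fin n) ℝ) : frob M ^ 2 = (Mᵀ * M).trace := by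
  rw [frob, Real.sq_sqrt (by positivity), trace_transpose_mul_self_eq_sum_sq]

theorem stmt12 {d K : ℕ} (A B : Matrix (Fin d) (Fin K) ℝ)
    (hA : Aᵀ * A = 1) (hBs : Bᵀ * B = 1)
    (hB : (Aᵀ * (B * Bᵀ) * A).PosSemidef)
    (hB1 : (1 - Aᵀ * (B * Bᵀ) * A).PosSemidef)
    (hAB : Aᵀ * B = hB.sqrt) :
    frob (B * Bᵀ - A * Aᵀ) ^ 2 = 2 * (1 - Aᵀ * (B * Bᵀ) * A).trace ∧
    frob (B - A) ^ 2 = 2 * (1 - hB.sqrt).trace ∧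
    frob (B - A) ^ 2 ≤ frob (B * Bᵀ - A * Aᵀ) ^ 2 := by
  have hproj : frob (B * Bᵀ - A * Aᵀ) ^ 2 = 2 * (1 - Aᵀ * (B * Bᵀ) * A).trace := by
    rw [frob_sq, trace_transpose_mul_self_mul_transpose_sub hA hBs]
  have hdiff : frob (B - A) ^ 2 = 2 * (1 - hB.sqrt).trace := by
    rw [frob_sq, trace_transpose_mul_self_sub hA hBs, hAB]
  refine ⟨hproj, hdiff, ?_⟩
  rw [hproj, hdiff, trace_sub, trace_sub]
  linarith [hB.trace_le_trace_sqrt hB1]
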